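/- Let F(y) = 1 + y^2/4 + y^4/64 + y^6/256 + (5/768) y^8 and N(y) = ∑_{j=0}^∞ binom(1/2, j)^2 y^{2j} (which equals the H^1(T^2) norm of z1 + y z2). Then the function y ↦ F(y)/N(y) is monotonically increasing on [0, 1]. -/

import Mathlib

/-- The generalized binomial coefficient `r(r-1)⋯(r-j+1)/j!`. -/
noncomputable def gbinom (r : ℝ) (j : ℕ) : ℝ :=
  (∏ k ∈ Finset.range j, (r - k)) / (Nat.factorial j)

/-- `F(y) = 1 + y²/4 + y⁴/64 + y⁶/256 + (5/768)y⁸`. -/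
noncomputable def F (y : ℝ) : ℝ :=
  1 + y ^ 2 / 4 + y ^ 4 / 64 + y ^ 6 / 256 + (5/768) * y ^ 8

/-- `N(y) = ∑_{j≥0} binom(1/2,j)² y^{2j}`, the `H¹(𝕋²)` norm of `z₁ + y z₂`. -/
noncomputable def N (y : ℝ) : ℝ := ∑' j : ℕ, gbinom (1/2) j ^ 2 * y ^ (2 * j)

/-!
Put `t = y²`, so that `N(y) = ∑ aⱼ tʲ` with `aⱼ = binom(1/2, j)² ≥ 0` and `F(y) = Fpoly t`, where
`Fpoly` is the truncation `∑_{j<5} aⱼ tʲ` of that series plus an extra multiple of `t⁴`, chosen so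
that `Fpoly'(1) / Fpoly(1) = 1/4 = ∑ j aⱼ / ∑ aⱼ`; the last identity follows by telescoping from
the recurrence `4(j+1)² aⱼ₊₁ = (2j-1)² aⱼ`, which also gives `aⱼ ≤ 1/(4j³)`.
The numerator `t (Fpoly' Nseries - Fpoly Nseries')` of the derivative of the ratio is
`∑ aⱼ tʲ (t Fpoly'(t) - j Fpoly(t))`. For `j ≥ 5` each term is at least
`t⁵ aⱼ (Fpoly'(1) - j Fpoly(1))`, and the first five terms together dominate their counterparts,
so the numerator is at least `t⁵ (Fpoly'(1) ∑ aⱼ - Fpoly(1) ∑ j aⱼ) = 0`.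
-/

open Finset Filter Topology

lemma gbinom_succ (r : ℝ) (j : ℕ) : gbinom r (j + 1) = gbinom r j * (r - j) / (j + 1) := by
  have : (j.factorial : ℝ) ≠ 0 := by positivity
  simp only [gbinom, prod_range_succ, Nat.factorial_succ, Nat.cast_mul, Nat.cast_succ]
  field_simp

noncomputable def binomHalfSq (j : ℕ) : ℝ := gbinom (1 / 2) j ^ 2

lemma binomHalfSq_nonneg (j : ℕ) : 0 ≤ binomHalfSq j := sq_nonneg _

lemma binomHalfSq_succ (j : ℕ) :
    4 * ((j : ℝ) + 1) ^ 2 * binomHalfSq (j + 1) = (2 * j - 1) ^ 2 * binomHalfSq j := by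
  have : (j : ℝ) + 1 ≠ 0 := by positivity
  rw [binomHalfSq, binomHalfSq, gbinom_succ]
  field_simp
  ring

lemma binomHalfSq_zero : binomHalfSq 0 = 1 := by simp [binomHalfSq, gbinom]
lemma binomHalfSq_one : binomHalfSq 1 = 1 / 4 := by norm_num [binomHalfSq, gbinom]
lemma binomHalfSq_two : binomHalfSq 2 = 1 / 64 := by
  norm_num [binomHalfSq, gbinom, prod_range_succ, Nat.factorial]
lemma binomHalfSq_three : binomHalfSq 3 = 1 / 256 := by
  norm_num [binomHalfSq, gbinom, prod_range_succ, Nat.factorial]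
lemma binomHalfSq_four : binomHalfSq 4 = 25 / 16384 := by
  norm_num [binomHalfSq, gbinom, prod_range_succ, Nat.factorial]

lemma four_mul_cube_mul_binomHalfSq_le_one (j : ℕ) : 4 * (j : ℝ) ^ 3 * binomHalfSq j ≤ 1 := by
  induction j with
  | zero => simp
  | succ n ih =>
    have hrec := binomHalfSq_succ n
    rcases n.eq_zero_or_pos with rfl | hn
    · norm_num [binomHalfSq_one]
    have hn : (1 : ℝ) ≤ n := by exact_mod_cast hn
    have hpoly : ((n : ℝ) + 1) * (2 * n - 1) ^ 2 ≤ 4 * n ^ 3 := by nlinarith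
    have hpos : (0 : ℝ) < 4 * n ^ 3 := by positivity
    refine le_of_mul_le_mul_left ?_ hpos
    calc 4 * (n : ℝ) ^ 3 * (4 * ((n + 1 : ℕ) : ℝ) ^ 3 * binomHalfSq (n + 1))
        = ((n : ℝ) + 1) * (2 * n - 1) ^ 2 * (4 * n ^ 3 * binomHalfSq n) := by
          push_cast; linear_combination (4 * (n : ℝ) ^ 3 * (n + 1)) * hrec
      _ ≤ ((n : ℝ) + 1) * (2 * n - 1) ^ 2 * 1 := by gcongr
      _ ≤ 4 * n ^ 3 * 1 := by linarith

lemma nat_mul_binomHalfSq_le (j : ℕ) : (j : ℝ) * binomHalfSq j ≤ 1 / 4 * (1 / (j : ℝ) ^ 2) := by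
  rcases j.eq_zero_or_pos with rfl | hj
  · simp
  have hj : (0 : ℝ) < j := by exact_mod_cast hj
  have := four_mul_cube_mul_binomHalfSq_le_one j
  rw [← div_eq_mul_one_div, le_div_iff₀ (by positivity)]
  nlinarith

lemma summable_nat_mul_binomHalfSq : Summable fun j : ℕ => (j : ℝ) * binomHalfSq j :=
  ((Real.summable_one_div_nat_pow.mpr one_lt_two).mul_left (1 / 4)).of_nonneg_of_le
    (fun j => mul_nonneg j.cast_nonneg (binomHalfSq_nonneg j)) nat_mul_binomHalfSq_le

lemma summable_binomHalfSq : Summable binomHalfSq := by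
  refine (summable_nat_add_iff 1).mp ?_
  refine ((summable_nat_add_iff 1).mpr summable_nat_mul_binomHalfSq).of_nonneg_of_le
    (fun j => binomHalfSq_nonneg _) fun j => ?_
  have : (1 : ℝ) ≤ (j + 1 : ℕ) := by exact_mod_cast j.succ_pos
  exact le_mul_of_one_le_left (binomHalfSq_nonneg _) this

lemma sum_range_four_mul_sub_one_mul_binomHalfSq (J : ℕ) :
    ∑ j ∈ range J, (4 * (j : ℝ) - 1) * binomHalfSq j = -(4 * (J : ℝ) ^ 2 * binomHalfSq J) := by
  induction J with
  | zero => simp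
  | succ n ih =>
    rw [sum_range_succ, ih]
    push_cast
    linear_combination binomHalfSq_succ n

lemma tendsto_four_mul_sq_mul_binomHalfSq :
    Tendsto (fun J : ℕ => 4 * (J : ℝ) ^ 2 * binomHalfSq J) atTop (𝓝 0) := by
  refine squeeze_zero (fun J => by positivity [binomHalfSq_nonneg J]) (fun J => ?_)
    tendsto_one_div_atTop_nhds_zero_nat
  rcases J.eq_zero_or_pos with rfl | hJ
  · simp
  rw [le_div_iff₀ (by exact_mod_cast hJ)]
  linarith [four_mul_cube_mul_binomHalfSq_le_one J]

lemma tsum_nat_mul_binomHalfSq :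
    ∑' j : ℕ, (j : ℝ) * binomHalfSq j = (∑' j : ℕ, binomHalfSq j) / 4 := by
  have hs := (summable_nat_mul_binomHalfSq.mul_left 4).sub summable_binomHalfSq
  have h0 : ∑' j : ℕ, (4 * ((j : ℝ) * binomHalfSq j) - binomHalfSq j) = 0 := by
    refine tendsto_nhds_unique hs.hasSum.tendsto_sum_nat ?_
    have h := tendsto_four_mul_sq_mul_binomHalfSq.neg
    simp only [neg_zero, ← sum_range_four_mul_sub_one_mul_binomHalfSq] at h
    exact h.congr fun J => sum_congr rfl fun j _ => by ring
  rw [(summable_nat_mul_binomHalfSq.mul_left 4).tsum_sub summable_binomHalfSq, tsum_mul_left] at h0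
  linarith

lemma tsum_le_tsum_of_sum_range_le {f g : ℕ → ℝ} (hf : Summable f) (hg : Summable g) (n : ℕ)
    (hhead : ∑ j ∈ range n, f j ≤ ∑ j ∈ range n, g j) (htail : ∀ j, n ≤ j → f j ≤ g j) :
    ∑' j, f j ≤ ∑' j, g j := by
  rw [← hf.sum_add_tsum_nat_add n, ← hg.sum_add_tsum_nat_add n]
  exact add_le_add hhead <| ((summable_nat_add_iff n).mpr hf).tsum_le_tsum
    (fun j => htail _ (Nat.le_add_left n j)) ((summable_nat_add_iff n).mpr hg)

lemma monotoneOn_div_of_hasDerivAt {f g f' g' : ℝ → ℝ} {a b : ℝ}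
    (hf : ContinuousOn f (Set.Icc a b)) (hg : ContinuousOn g (Set.Icc a b))
    (hg0 : ∀ x ∈ Set.Icc a b, g x ≠ 0) (hf' : ∀ x ∈ Set.Ioo a b, HasDerivAt f (f' x) x)
    (hg' : ∀ x ∈ Set.Ioo a b, HasDerivAt g (g' x) x)
    (h : ∀ x ∈ Set.Ioo a b, f x * g' x ≤ f' x * g x) :
    MonotoneOn (fun x => f x / g x) (Set.Icc a b) := by
  refine monotoneOn_of_hasDerivWithinAt_nonneg (convex_Icc a b) (hf.div hg hg0) (fun x hx => ?_)
    (fun x hx => ?_) (f' := fun x => (f' x * g x - f x * g' x) / g x ^ 2)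
  · rw [interior_Icc] at hx
    exact ((hf' x hx).div (hg' x hx) (hg0 x (Set.Ioo_subset_Icc_self hx))).hasDerivWithinAt
  · rw [interior_Icc] at hx
    exact div_nonneg (sub_nonneg.mpr (h x hx)) (sq_nonneg _)

section PowerSeries

variable {a : ℕ → ℝ}

lemma summable_mul_pow (ha : Summable fun j => |a j|) {t : ℝ} (ht : |t| ≤ 1) :
    Summable fun j => a j * t ^ j :=
  ha.of_norm_bounded fun j => by
    rw [norm_mul, norm_pow, Real.norm_eq_abs, Real.norm_eq_abs]
    exact mul_le_of_le_one_right (abs_nonneg _) (pow_le_one₀ (abs_nonneg t) ht)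

lemma continuousOn_tsum_mul_pow (ha : Summable fun j => |a j|) :
    ContinuousOn (fun t => ∑' j, a j * t ^ j) (Set.Icc (-1) 1) := by
  refine continuousOn_tsum (fun j => (continuous_const.mul (continuous_pow j)).continuousOn) ha
    fun j t ht => ?_
  rw [norm_mul, norm_pow, Real.norm_eq_abs, Real.norm_eq_abs]
  exact mul_le_of_le_one_right (abs_nonneg _) (pow_le_one₀ (abs_nonneg t) (abs_le.mpr ht))

lemma hasDerivAt_tsum_mul_pow (ha : Summable fun j : ℕ => (j : ℝ) * |a j|) {t : ℝ}
    (ht : t ∈ Set.Ioo (-1) 1) :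
    HasDerivAt (fun s => ∑' j, a j * s ^ j) (∑' j, j * a j * t ^ (j - 1)) t := by
  have h0 : Summable fun j => a j * (0 : ℝ) ^ j :=
    summable_of_ne_finset_zero (s := {0}) fun j hj => by simp_all
  rw [tsum_congr fun j : ℕ => (by ring : (j : ℝ) * a j * t ^ (j - 1) = a j * (j * t ^ (j - 1)))]
  refine hasDerivAt_tsum_of_isPreconnected ha isOpen_Ioo (convex_Ioo (-1) 1).isPreconnected
    (fun j s _ => (hasDerivAt_pow j s).const_mul (a j)) (fun j s hs => ?_)
    (by norm_num : (0 : ℝ) ∈ Set.Ioo (-1) 1) h0 ht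
  rw [norm_mul, norm_mul, norm_pow, Real.norm_eq_abs, Real.norm_eq_abs, Real.norm_eq_abs,
    Nat.abs_cast, mul_left_comm, ← mul_assoc]
  exact mul_le_of_le_one_right (mul_nonneg j.cast_nonneg (abs_nonneg _))
    (pow_le_one₀ (abs_nonneg s) (abs_le.mpr ⟨hs.1.le, hs.2.le⟩))

lemma mul_tsum_nat_mul_pow_sub_one (t : ℝ) :
    t * ∑' j, j * a j * t ^ (j - 1) = ∑' j, j * a j * t ^ j := by
  rw [← tsum_mul_left]
  refine tsum_congr fun j => ?_
  rcases j with _ | j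
  · simp
  · rw [Nat.add_sub_cancel, pow_succ]; ring

end PowerSeries

noncomputable def Fpoly (t : ℝ) : ℝ := 1 + t / 4 + t ^ 2 / 64 + t ^ 3 / 256 + 5 / 768 * t ^ 4

noncomputable def Fpoly' (t : ℝ) : ℝ := 1 / 4 + t / 32 + 3 * t ^ 2 / 256 + 5 / 192 * t ^ 3

noncomputable def Nseries (t : ℝ) : ℝ := ∑' j, binomHalfSq j * t ^ j

lemma F_eq_Fpoly_sq (y : ℝ) : F y = Fpoly (y ^ 2) := by
  unfold F Fpoly; ring

lemma N_eq_Nseries_sq (y : ℝ) : N y = Nseries (y ^ 2) := by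
  simp only [N, Nseries, binomHalfSq, pow_mul]

lemma hasDerivAt_Fpoly (t : ℝ) :
    HasDerivAt Fpoly (Fpoly' t) t := by
  have h := ((((hasDerivAt_id t).div_const 4).const_add 1).add
    ((hasDerivAt_pow 2 t).div_const 64)).add ((hasDerivAt_pow 3 t).div_const 256) |>.add
    ((hasDerivAt_pow 4 t).const_mul (5 / 768))
  exact h.congr_deriv (by unfold Fpoly'; norm_num; ring)

lemma summable_abs_binomHalfSq : Summable fun j => |binomHalfSq j| := by
  simpa only [abs_of_nonneg (binomHalfSq_nonneg _)] using summable_binomHalfSq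

lemma summable_nat_mul_abs_binomHalfSq : Summable fun j : ℕ => (j : ℝ) * |binomHalfSq j| := by
  simpa only [abs_of_nonneg (binomHalfSq_nonneg _)] using summable_nat_mul_binomHalfSq

lemma one_le_Nseries {t : ℝ} (ht0 : 0 ≤ t) (ht1 : t ≤ 1) : 1 ≤ Nseries t := by
  have h := (summable_mul_pow summable_abs_binomHalfSq (abs_le.mpr ⟨by linarith, ht1⟩)).le_tsum 0
    fun j _ => mul_nonneg (binomHalfSq_nonneg j) (pow_nonneg ht0 j)
  simpa [Nseries, binomHalfSq_zero] using h

-- Here `245/768 = Fpoly' 1` and `980/768 = Fpoly 1`; for `x ≥ 5` all coefficients of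
-- `t * Fpoly' t - x * Fpoly t` are negative.
lemma Fpoly_tail_bounds {x t : ℝ} (hx : 5 ≤ x) (ht0 : 0 ≤ t) (ht1 : t ≤ 1) :
    245 / 768 - x * (980 / 768) ≤ t * Fpoly' t - x * Fpoly t ∧
      t * Fpoly' t - x * Fpoly t ≤ 0 := by
  unfold Fpoly Fpoly'
  have h2 : t ^ 2 ≤ 1 := pow_le_one₀ ht0 ht1
  have h3 : t ^ 3 ≤ 1 := pow_le_one₀ ht0 ht1
  have h4 : t ^ 4 ≤ 1 := pow_le_one₀ ht0 ht1
  have hx' : 0 ≤ x - 5 := by linarith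
  constructor
  · nlinarith [mul_nonneg hx' (sub_nonneg.2 ht1), mul_nonneg hx' (sub_nonneg.2 h2),
      mul_nonneg hx' (sub_nonneg.2 h3), mul_nonneg hx' (sub_nonneg.2 h4)]
  · nlinarith [mul_nonneg hx' ht0, mul_nonneg hx' (pow_nonneg ht0 2),
      mul_nonneg hx' (pow_nonneg ht0 3), mul_nonneg hx' (pow_nonneg ht0 4), pow_nonneg ht0 2,
      pow_nonneg ht0 3, pow_nonneg ht0 4]

lemma Fpoly_mul_tsum_le {t : ℝ} (ht0 : 0 ≤ t) (ht1 : t ≤ 1) :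
    Fpoly t * ∑' j, j * binomHalfSq j * t ^ j ≤ t * Fpoly' t * Nseries t := by
  have ht : |t| ≤ 1 := abs_le.mpr ⟨by linarith, ht1⟩
  have hN := summable_mul_pow summable_abs_binomHalfSq ht
  have hM : Summable fun j : ℕ => j * binomHalfSq j * t ^ j := by
    refine summable_mul_pow (a := fun j : ℕ => j * binomHalfSq j) ?_ ht
    simpa only [abs_mul, Nat.abs_cast] using summable_nat_mul_abs_binomHalfSq
  have hlower : HasSum (fun j : ℕ => t ^ 5 * binomHalfSq j * (245 / 768 - j * (980 / 768))) 0 := by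
    have h := (summable_binomHalfSq.hasSum.mul_left (t ^ 5 * (245 / 768))).sub
      (summable_nat_mul_binomHalfSq.hasSum.mul_left (t ^ 5 * (980 / 768)))
    rw [tsum_nat_mul_binomHalfSq, show ∀ x : ℝ,
      t ^ 5 * (245 / 768) * x - t ^ 5 * (980 / 768) * (x / 4) = 0 from fun x => by ring] at h
    exact h.congr_fun fun j => by ring
  have hnumerator : HasSum (fun j : ℕ => binomHalfSq j * t ^ j * (t * Fpoly' t - j * Fpoly t))
      (t * Fpoly' t * Nseries t - Fpoly t * ∑' j, j * binomHalfSq j * t ^ j) :=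
    ((hN.hasSum.mul_left (t * Fpoly' t)).sub (hM.hasSum.mul_left (Fpoly t))).congr_fun
      fun j => by ring
  have hhead : ∑ j ∈ range 5, t ^ 5 * binomHalfSq j * (245 / 768 - j * (980 / 768)) ≤
      ∑ j ∈ range 5, binomHalfSq j * t ^ j * (t * Fpoly' t - j * Fpoly t) := by
    simp only [sum_range_succ, sum_range_zero, binomHalfSq_zero, binomHalfSq_one,
      binomHalfSq_two, binomHalfSq_three, binomHalfSq_four, Fpoly, Fpoly']
    push_cast
    -- the difference is `(245/49152) t⁴ (1 - t) (4 - t/32 - t(1+t)/256)`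
    have h : 0 ≤ t ^ 4 * (1 - t) * (4 - t / 32 - t * (1 + t) / 256) := by
      have : 0 ≤ 4 - t / 32 - t * (1 + t) / 256 := by nlinarith
      exact mul_nonneg (mul_nonneg (pow_nonneg ht0 4) (sub_nonneg.2 ht1)) this
    nlinarith [h]
  have htail : ∀ j, 5 ≤ j → t ^ 5 * binomHalfSq j * (245 / 768 - j * (980 / 768)) ≤
      binomHalfSq j * t ^ j * (t * Fpoly' t - j * Fpoly t) := by
    intro j hj
    obtain ⟨hlow, hnonpos⟩ := Fpoly_tail_bounds (x := j) (by exact_mod_cast hj) ht0 ht1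
    have hpow : t ^ j ≤ t ^ 5 := pow_le_pow_of_le_one ht0 ht1 hj
    calc t ^ 5 * binomHalfSq j * (245 / 768 - j * (980 / 768))
        ≤ binomHalfSq j * (t ^ 5 * (t * Fpoly' t - j * Fpoly t)) := by
          rw [mul_comm (t ^ 5), mul_assoc]
          exact mul_le_mul_of_nonneg_left
            (mul_le_mul_of_nonneg_left hlow (pow_nonneg ht0 5)) (binomHalfSq_nonneg j)
      _ ≤ binomHalfSq j * (t ^ j * (t * Fpoly' t - j * Fpoly t)) :=
          mul_le_mul_of_nonneg_left (mul_le_mul_of_nonpos_right hpow hnonpos)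
            (binomHalfSq_nonneg j)
      _ = _ := by ring
  have hcmp := tsum_le_tsum_of_sum_range_le hlower.summable hnumerator.summable 5 hhead htail
  rw [hlower.tsum_eq, hnumerator.tsum_eq] at hcmp
  linarith

lemma monotoneOn_Fpoly_div_Nseries :
    MonotoneOn (fun t => Fpoly t / Nseries t) (Set.Icc 0 1) := by
  have hIcc : Set.Icc (0 : ℝ) 1 ⊆ Set.Icc (-1) 1 := Set.Icc_subset_Icc_left (by norm_num)
  have hIoo : Set.Ioo (0 : ℝ) 1 ⊆ Set.Ioo (-1) 1 := Set.Ioo_subset_Ioo_left (by norm_num)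
  refine monotoneOn_div_of_hasDerivAt
    (fun t _ => (hasDerivAt_Fpoly t).continuousAt.continuousWithinAt)
    ((continuousOn_tsum_mul_pow summable_abs_binomHalfSq).mono hIcc)
    (fun t ht => (one_pos.trans_le (one_le_Nseries ht.1 ht.2)).ne')
    (fun t _ => hasDerivAt_Fpoly t)
    (fun t ht => hasDerivAt_tsum_mul_pow summable_nat_mul_abs_binomHalfSq (hIoo ht))
    fun t ht => ?_
  have key := Fpoly_mul_tsum_le ht.1.le ht.2.le
  rw [← mul_tsum_nat_mul_pow_sub_one] at key
  refine le_of_mul_le_mul_left ?_ ht.1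
  linarith

theorem stmt9 : MonotoneOn (fun y => F y / N y) (Set.Icc (0:ℝ) 1) := by
  have hcomp : (fun y => F y / N y) = (fun t => Fpoly t / Nseries t) ∘ (· ^ 2) := by
    funext y
    simp only [Function.comp, F_eq_Fpoly_sq, N_eq_Nseries_sq]
  rw [hcomp]
  exact monotoneOn_Fpoly_div_Nseries.comp (pow_left_monotoneOn.mono fun y hy => hy.1)
    fun y hy => ⟨sq_nonneg y, pow_le_one₀ hy.1 hy.2⟩
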